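/- arXiv:2403.19145 — 2 statements merged into one kernel-verified Lean document; each statement's English description precedes it below -/
import Mathlib

section
/- Let Σ and Σ' be bases of Δ such that every element of Σ is a non-negative integer combination of elements of Σ' (i.e., Σ ⊆ ℕΣ'). Then Σ = Σ'. -/
/-!
Extending a base `Σ` to a basis of `V` gives a linear "height" `φ` with `φ = 1` on `Σ`; on `ℕΣ`
it vanishes only at `0` and is `≥ 1` elsewhere. For the base `Σ'` this rules out `-σ' ∈ ℕΣ'`,
so `Σ' ⊆ ℕΣ` and `ℕΣ = ℕΣ'`. An element of `Σ`, of height one, is then not a sum of two nonzero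
elements of this monoid, hence is one of the generators from `Σ'`; symmetrically `Σ' ⊆ Σ`.
-/

open Pointwise

/-- `NComb S` is the set of all finite linear combinations of elements of `S`
with non-negative integer coefficients, i.e. the additive submonoid generated by `S`. -/
def NComb {V : Type*} [AddCommMonoid V] (S : Set V) : Set V :=
  (AddSubmonoid.closure S : Set V)

/-- `B` is a base of `Δ`: `B ⊆ Δ`, `B` is linearly independent over `ℝ`, and
`Δ ⊆ ℕB ∪ (−ℕB)`. -/
def IsBase {V : Type*} [AddCommGroup V] [Module ℝ V] (Δ B : Set V) : Prop :=
  B ⊆ Δ ∧ LinearIndependent ℝ (fun x : B => (x : V)) ∧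
    Δ ⊆ NComb B ∪ (-NComb B)

open Module

theorem LinearIndepOn.exists_linearMap_eq_one {K V : Type*} [Field K] [AddCommGroup V]
    [Module K V] {s : Set V} (hs : LinearIndepOn K id s) :
    ∃ φ : V →ₗ[K] K, ∀ x ∈ s, φ x = 1 := by
  refine ⟨(Basis.extend hs).constr K fun _ => 1, fun x hx => ?_⟩
  simpa using (Basis.extend hs).constr_basis K (fun _ => 1) ⟨x, Basis.subset_extend hs hx⟩

namespace AddSubmonoid

variable {M F : Type*}

theorem eq_zero_or_mem_or_exists_add_of_mem_closure [AddMonoid M] {S : Set M} {x : M}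
    (hx : x ∈ closure S) :
    x = 0 ∨ x ∈ S ∨ ∃ y ∈ closure S, ∃ z ∈ closure S, y ≠ 0 ∧ z ≠ 0 ∧ y + z = x := by
  induction hx using closure_induction with
  | mem x hx => exact .inr (.inl hx)
  | zero => exact .inl rfl
  | add y z hy hz ihy ihz =>
    by_cases hy0 : y = 0
    · simpa [hy0] using ihz
    by_cases hz0 : z = 0
    · simpa [hz0] using ihy
    exact .inr (.inr ⟨y, hy, z, hz, hy0, hz0, rfl⟩)

variable [AddCommMonoid M] [FunLike F M ℝ] [AddMonoidHomClass F M ℝ]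

theorem eq_zero_or_one_le_of_mem_closure (φ : F) {S : Set M} (hS : ∀ s ∈ S, 1 ≤ φ s)
    {x : M} (hx : x ∈ closure S) : x = 0 ∨ 1 ≤ φ x := by
  induction hx using closure_induction with
  | mem x hx => exact .inr (hS x hx)
  | zero => exact .inl rfl
  | add y z _ _ hy hz =>
    rcases hy with rfl | hy
    · simpa using hz
    rcases hz with rfl | hz
    · simpa using Or.inr hy
    refine .inr ?_
    rw [map_add]
    linarith

theorem nonneg_of_mem_closure (φ : F) {S : Set M} (hS : ∀ s ∈ S, 1 ≤ φ s)
    {x : M} (hx : x ∈ closure S) : 0 ≤ φ x := by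
  rcases eq_zero_or_one_le_of_mem_closure φ hS hx with rfl | h
  · simp
  · linarith

/-- An element of height one cannot be split into two nonzero elements of positive height, so
it is one of the generators. -/
theorem subset_of_subset_closure_of_subset_closure (φ : F) {S T : Set M} (hS : ∀ s ∈ S, φ s = 1)
    (hST : S ⊆ closure T) (hTS : T ⊆ closure S) : S ⊆ T := by
  intro s hs
  have hS1 : ∀ s ∈ S, 1 ≤ φ s := fun s hs => (hS s hs).ge
  have hTS' : closure T ≤ closure S := closure_le.mpr hTS
  rcases eq_zero_or_mem_or_exists_add_of_mem_closure (hST hs) with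
    rfl | hsT | ⟨y, hy, z, hz, hy0, hz0, rfl⟩
  · simpa using hS 0 hs
  · exact hsT
  · have hφy := (eq_zero_or_one_le_of_mem_closure φ hS1 (hTS' hy)).resolve_left hy0
    have hφz := (eq_zero_or_one_le_of_mem_closure φ hS1 (hTS' hz)).resolve_left hz0
    have hφs := hS _ hs
    rw [map_add] at hφs
    linarith

theorem neg_notMem_closure {G : Type*} [AddCommGroup G] [FunLike F G ℝ]
    [AddMonoidHomClass F G ℝ] (φ : F) {S : Set G} (hS : ∀ s ∈ S, 1 ≤ φ s) {s : G} (hs : s ∈ S) :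
    -s ∉ closure S := fun h => by
  have := nonneg_of_mem_closure φ hS h
  rw [map_neg] at this
  linarith [hS s hs]

end AddSubmonoid

theorem statement3_general {V : Type*} [AddCommGroup V] [Module ℝ V]
    (Δ B B' : Set V)
    (hB : IsBase Δ B) (hB' : IsBase Δ B')
    (h : B ⊆ NComb B') : B = B' := by
  obtain ⟨-, hBli, hBcov⟩ := hB
  obtain ⟨hB'Δ, hB'li, -⟩ := hB'
  obtain ⟨φ, hφ⟩ := LinearIndepOn.exists_linearMap_eq_one hBli
  obtain ⟨φ', hφ'⟩ := LinearIndepOn.exists_linearMap_eq_one hB'li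
  have h' : B' ⊆ NComb B := fun b hb => (hBcov (hB'Δ hb)).resolve_right fun hneg =>
    AddSubmonoid.neg_notMem_closure φ' (fun s hs => (hφ' s hs).ge) hb
      (AddSubmonoid.closure_le.mpr h hneg)
  exact (AddSubmonoid.subset_of_subset_closure_of_subset_closure φ hφ h h').antisymm
    (AddSubmonoid.subset_of_subset_closure_of_subset_closure φ' hφ' h' h)

/-- If every element of the base `B` is a non-negative integer combination of
elements of the base `B'`, then `B = B'`. -/
theorem statement3 {V : Type*} [AddCommGroup V] [Module ℝ V]
    (Δ B B' : Set V) (hfin : Δ.Finite) (h0 : (0 : V) ∉ Δ)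
    (hB : IsBase Δ B) (hB' : IsBase Δ B')
    (h : B ⊆ NComb B') : B = B' :=
  statement3_general Δ B B' hB hB' h
end

section
/- In ℝ² with γ := e_1 and ν := e_2, let Δ := {±2γ, ±2ν, γ+ν, γ−ν, −γ+ν, −γ−ν}. Then Σ := {γ−ν, 2ν} is a base of Δ; moreover Σ' := {ν−γ, 2γ} is also a base of Δ and Δ ∩ ℕΣ' = ((Δ ∩ ℕΣ) \ {γ−ν}) ∪ {ν−γ}. (Δ is the restricted root system C(1,1) of the pair (d(2,1;a), osp(2|2)×so(2)), and Σ' is the singular reflection of Σ in γ−ν.) -/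
/-! Each base comes from a splitting `Δ = P ∪ -P`, with `P = {2γ, 2ν, γ+ν, γ−ν}` for `Σ` and
`P' = {2γ, 2ν, γ+ν, ν−γ}` for `Σ'`, where `P ⊆ ℕΣ` by explicit combinations. The functional
`2γ* + ν*` (resp. `γ* + 2ν*`) is positive on `P`, hence non-negative on `ℕΣ`, so `-P` misses `ℕΣ`
and `Δ ∩ ℕΣ = P`; passing from `P` to `P'` exchanges `γ−ν` for `ν−γ`. -/

open Pointwise

/-- `γ = e₁` in `ℝ²`. -/
def g : Fin 2 → ℝ := ![1, 0]

/-- `ν = e₂` in `ℝ²`. -/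
def v : Fin 2 → ℝ := ![0, 1]

/-- The restricted root system `C(1,1) = {±2γ, ±2ν, γ+ν, γ−ν, −γ+ν, −γ−ν}` of the pair
`(d(2,1;a), osp(2|2) × so(2))`. -/
def Δ13 : Set (Fin 2 → ℝ) :=
  {(2 : ℝ) • g, -((2 : ℝ) • g), (2 : ℝ) • v, -((2 : ℝ) • v),
    g + v, g - v, -g + v, -g - v}

theorem nonneg_of_mem_NComb {M N : Type*} [AddCommMonoid M] [AddCommMonoid N] [PartialOrder N]
    [IsOrderedAddMonoid N] (f : M →+ N) {S : Set M} (hS : ∀ s ∈ S, 0 ≤ f s) {x : M}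
    (hx : x ∈ NComb S) : 0 ≤ f x := by
  induction hx using AddSubmonoid.closure_induction with
  | mem s hs => exact hS s hs
  | zero => simp
  | add x y _ _ hx hy => simpa using add_nonneg hx hy

theorem mem_NComb_pair {M : Type*} [AddCommMonoid M] {a b : M} (m n : ℕ) :
    m • a + n • b ∈ NComb {a, b} :=
  (AddSubmonoid.mem_closure_pair a b _).mpr ⟨m, n, rfl⟩

theorem isBase_of_eq_union_neg {V : Type*} [AddCommGroup V] [Module ℝ V] {Δ P B : Set V}
    (hΔ : Δ = P ∪ -P) (hBP : B ⊆ P) (hPB : P ⊆ NComb B) (hB : LinearIndepOn ℝ id B) :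
    IsBase Δ B :=
  ⟨hΔ ▸ hBP.trans Set.subset_union_left, hB,
    hΔ ▸ Set.union_subset_union hPB (Set.neg_subset_neg.mpr hPB)⟩

theorem inter_NComb_eq_of_eq_union_neg {V N : Type*} [AddCommGroup V] [AddCommGroup N]
    [PartialOrder N] [IsOrderedAddMonoid N] {Δ P B : Set V} (hΔ : Δ = P ∪ -P) (hBP : B ⊆ P)
    (hPB : P ⊆ NComb B) (f : V →+ N) (hf : ∀ p ∈ P, 0 < f p) : Δ ∩ NComb B = P := by
  subst hΔ
  refine Set.Subset.antisymm ?_ (Set.subset_inter Set.subset_union_left hPB)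
  rintro x ⟨hxP | hxnegP, hx⟩
  · exact hxP
  · have hfx_nonneg := nonneg_of_mem_NComb f (fun b hb => (hf b (hBP hb)).le) hx
    have hfx_neg : f x < 0 := by simpa using hf (-x) hxnegP
    exact (hfx_neg.trans_le hfx_nonneg).false.elim

theorem linearIndepOn_pair_of_det_ne_zero {K : Type*} [Field K] {a b : Fin 2 → K}
    (h : a 0 * b 1 - a 1 * b 0 ≠ 0) : LinearIndepOn K id {a, b} := by
  refine linearIndepOn_id_pair (fun ha => h (by simp [ha])) fun c hc => h ?_
  simp only [← hc, Pi.smul_apply, smul_eq_mul]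
  ring

def commonPosRoots13 : Set (Fin 2 → ℝ) := {(2 : ℝ) • g, (2 : ℝ) • v, g + v}

theorem Δ13_eq_insert_union_neg {r : Fin 2 → ℝ} (hr : r = g - v ∨ r = v - g) :
    Δ13 = insert r commonPosRoots13 ∪ -insert r commonPosRoots13 := by
  rcases hr with rfl | rfl <;> ext x <;>
  · simp only [Δ13, commonPosRoots13, Set.mem_union, Set.mem_insert_iff, Set.mem_singleton_iff,
      Set.mem_neg, neg_eq_iff_eq_neg, neg_add', neg_sub, neg_add_eq_sub]
    tauto

theorem insert_commonPosRoots13_subset_NComb :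
    insert (g - v) commonPosRoots13 ⊆ NComb {g - v, (2 : ℝ) • v} := by
  simp only [commonPosRoots13, Set.insert_subset_iff, Set.singleton_subset_iff]
  refine ⟨?_, ?_, ?_, ?_⟩
  · convert mem_NComb_pair (a := g - v) (b := (2 : ℝ) • v) 1 0 using 1; module
  · convert mem_NComb_pair (a := g - v) (b := (2 : ℝ) • v) 2 1 using 1; module
  · convert mem_NComb_pair (a := g - v) (b := (2 : ℝ) • v) 0 1 using 1; module
  · convert mem_NComb_pair (a := g - v) (b := (2 : ℝ) • v) 1 1 using 1; module

theorem insert_commonPosRoots13_subset_NComb' :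
    insert (v - g) commonPosRoots13 ⊆ NComb {v - g, (2 : ℝ) • g} := by
  simp only [commonPosRoots13, Set.insert_subset_iff, Set.singleton_subset_iff]
  refine ⟨?_, ?_, ?_, ?_⟩
  · convert mem_NComb_pair (a := v - g) (b := (2 : ℝ) • g) 1 0 using 1; module
  · convert mem_NComb_pair (a := v - g) (b := (2 : ℝ) • g) 0 1 using 1; module
  · convert mem_NComb_pair (a := v - g) (b := (2 : ℝ) • g) 2 1 using 1; module
  · convert mem_NComb_pair (a := v - g) (b := (2 : ℝ) • g) 1 1 using 1; module

/-- `Σ = {γ−ν, 2ν}` is a base of `Δ`; `Σ' = {ν−γ, 2γ}` is also a base, obtained from `Σ` by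
the singular reflection in `γ−ν`. -/
theorem statement13 :
    IsBase Δ13 {g - v, (2 : ℝ) • v} ∧
    IsBase Δ13 {v - g, (2 : ℝ) • g} ∧
    Δ13 ∩ NComb {v - g, (2 : ℝ) • g}
      = ((Δ13 ∩ NComb {g - v, (2 : ℝ) • v}) \ {g - v}) ∪ {v - g} := by
  have hΔ := Δ13_eq_insert_union_neg (Or.inl rfl)
  have hΔ' := Δ13_eq_insert_union_neg (Or.inr rfl)
  have hBP : {g - v, (2 : ℝ) • v} ⊆ insert (g - v) commonPosRoots13 := by
    simp [Set.insert_subset_iff, commonPosRoots13]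
  have hBP' : {v - g, (2 : ℝ) • g} ⊆ insert (v - g) commonPosRoots13 := by
    simp [Set.insert_subset_iff, commonPosRoots13]
  let ε : Fin 2 → (Fin 2 → ℝ) →+ ℝ := Pi.evalAddMonoidHom (fun _ => ℝ)
  have hpos : ∀ p ∈ insert (g - v) commonPosRoots13, 0 < (2 • ε 0 + ε 1) p := by
    norm_num [ε, commonPosRoots13, g, v]
  have hpos' : ∀ p ∈ insert (v - g) commonPosRoots13, 0 < (ε 0 + 2 • ε 1) p := by
    norm_num [ε, commonPosRoots13, g, v]
  refine ⟨isBase_of_eq_union_neg hΔ hBP insert_commonPosRoots13_subset_NComb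
      (linearIndepOn_pair_of_det_ne_zero (by norm_num [g, v])),
    isBase_of_eq_union_neg hΔ' hBP' insert_commonPosRoots13_subset_NComb'
      (linearIndepOn_pair_of_det_ne_zero (by norm_num [g, v])), ?_⟩
  rw [inter_NComb_eq_of_eq_union_neg hΔ hBP insert_commonPosRoots13_subset_NComb _ hpos,
    inter_NComb_eq_of_eq_union_neg hΔ' hBP' insert_commonPosRoots13_subset_NComb' _ hpos',
    Set.insert_sdiff_self_of_notMem, Set.union_singleton]
  norm_num [commonPosRoots13, funext_iff, Fin.forall_fin_two, g, v]
end
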